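/- Let A, B, C, D be n×n matrices over the tropical semiring such that B = C ⊗ A and A = D ⊗ B (tropical matrix products). If B has full row rank, then for every row index i there exist an index κ ∈ {1,…,n} and a real scalar c = c_{iκ} ∈ ℝ such that b_{it} = c ⊗ a_{κt} for every t ∈ {1,…,n}; that is, every row of B is a real scalar tropical multiple of some row of A. -/

import Mathlib

/-!
From `A = D ⊗ B` and associativity, `B = (C ⊗ D) ⊗ B`, so row `i` of `B` is
`max_l ((C ⊗ D)_{il} + b_l)`. The terms with `l ≠ i` form a tropical combination of the other
rows, which by full row rank falls short of `b_i` in some column; there the diagonal term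
`(C ⊗ D)_{ii} + b_i` must attain the maximum, forcing `(C ⊗ D)_{ii} ≥ 0`, i.e.
`c_{iκ} + d_{κi} ≥ 0` for some `κ`. Then `b_i ≥ c_{iκ} + a_κ ≥ c_{iκ} + d_{κi} + b_i ≥ b_i`.
-/

/-- The tropical (max-plus) semiring carrier: `ℝ ∪ {-∞}`, with `⊥` playing the
role of `-∞`. -/
abbrev Trop : Type := WithBot ℝ

/-- Tropical matrix multiplication: `(A ⊗ B) i j = max_k (A i k + B k j)`. -/
def tropMulMat {n m p : ℕ} (A : Matrix (Fin n) (Fin m) Trop)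
    (B : Matrix (Fin m) (Fin p) Trop) : Matrix (Fin n) (Fin p) Trop :=
  fun i j => Finset.univ.sup fun k => A i k + B k j

/-- A tropical matrix has full row rank if no row is a tropical linear
combination of the other rows. -/
def FullRowRank {n m : ℕ} (B : Matrix (Fin n) (Fin m) Trop) : Prop :=
  ¬ ∃ (i : Fin n) (lam : Fin n → Trop),
      ∀ t, B i t = (Finset.univ.erase i).sup fun k => lam k + B k t

namespace WithBot

variable {α ι : Type*} [LinearOrder α] [Add α]

lemma finset_sup_add [AddRightMono α] (s : Finset ι) (f : ι → WithBot α) (a : WithBot α) :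
    s.sup f + a = s.sup fun i => f i + a :=
  Finset.apply_sup_eq_sup_comp_of_linearOrder (· + a) (fun _ _ h => add_le_add_left h a)
    (bot_add a)

lemma add_finset_sup [AddLeftMono α] (s : Finset ι) (f : ι → WithBot α) (a : WithBot α) :
    a + s.sup f = s.sup fun i => a + f i :=
  Finset.apply_sup_eq_sup_comp_of_linearOrder (a + ·) (fun _ _ h => add_le_add_right h a)
    (add_bot a)

end WithBot

lemma le_tropMulMat {n m p : ℕ} (A : Matrix (Fin n) (Fin m) Trop)
    (B : Matrix (Fin m) (Fin p) Trop) (i : Fin n) (k : Fin m) (j : Fin p) :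
    A i k + B k j ≤ tropMulMat A B i j :=
  Finset.le_sup (f := fun k => A i k + B k j) (Finset.mem_univ k)

lemma tropMulMat_assoc {n m p q : ℕ} (A : Matrix (Fin n) (Fin m) Trop)
    (B : Matrix (Fin m) (Fin p) Trop) (C : Matrix (Fin p) (Fin q) Trop) :
    tropMulMat (tropMulMat A B) C = tropMulMat A (tropMulMat B C) := by
  ext i j
  simp only [tropMulMat, WithBot.finset_sup_add, WithBot.add_finset_sup, add_assoc]
  exact Finset.sup_comm _ _ _

lemma FullRowRank.zero_le_diag_of_tropMulMat_eq {n m : ℕ} {B : Matrix (Fin n) (Fin m) Trop}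
    {E : Matrix (Fin n) (Fin n) Trop} (hfull : FullRowRank B) (hE : tropMulMat E B = B)
    (i : Fin n) : 0 ≤ E i i := by
  have hterm : ∀ l t, E i l + B l t ≤ B i t := fun l t =>
    (le_tropMulMat E B i l t).trans_eq (congrFun (congrFun hE i) t)
  obtain ⟨t, ht⟩ : ∃ t, (Finset.univ.erase i).sup (fun l => E i l + B l t) < B i t := by
    by_contra! h
    exact hfull ⟨i, E i, fun t => le_antisymm (h t) (Finset.sup_le fun l _ => hterm l t)⟩
  have hsplit : B i t = (E i i + B i t) ⊔ (Finset.univ.erase i).sup (fun l => E i l + B l t) :=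
    calc B i t = Finset.univ.sup (fun l => E i l + B l t) := (congrFun (congrFun hE i) t).symm
      _ = (insert i (Finset.univ.erase i)).sup (fun l => E i l + B l t) := by
        rw [Finset.insert_erase (Finset.mem_univ i)]
      _ = _ := Finset.sup_insert
  have hdiag : 0 + B i t ≤ E i i + B i t := by
    rw [zero_add]
    exact (le_sup_iff.mp hsplit.le).resolve_right ht.not_ge
  exact (WithBot.add_le_add_iff_right (ne_bot_of_gt ht)).mp hdiag

lemma row_eq_add_row_of_zero_le {n m p : ℕ} {A : Matrix (Fin m) (Fin p) Trop}
    {B : Matrix (Fin n) (Fin p) Trop} {C : Matrix (Fin n) (Fin m) Trop}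
    {D : Matrix (Fin m) (Fin n) Trop} (hB : B = tropMulMat C A) (hA : A = tropMulMat D B)
    {i : Fin n} {κ : Fin m} (h : 0 ≤ C i κ + D κ i) (t : Fin p) :
    B i t = C i κ + A κ t := by
  have hAκ : D κ i + B i t ≤ A κ t := hA ▸ le_tropMulMat D B κ i t
  refine le_antisymm ?_ (hB ▸ le_tropMulMat C A i κ t)
  calc B i t ≤ C i κ + D κ i + B i t := le_add_of_nonneg_left h
    _ = C i κ + (D κ i + B i t) := add_assoc _ _ _
    _ ≤ C i κ + A κ t := by gcongr

theorem rows_are_scaled_rows {n : ℕ} (A B C D : Matrix (Fin n) (Fin n) Trop)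
    (hB : B = tropMulMat C A) (hA : A = tropMulMat D B)
    (hfull : FullRowRank B) :
    ∀ i : Fin n, ∃ (κ : Fin n) (c : ℝ), C i κ = (c : Trop) ∧
      ∀ t : Fin n, B i t = (c : Trop) + A κ t := by
  intro i
  have hCD : tropMulMat (tropMulMat C D) B = B := by rw [tropMulMat_assoc, ← hA, ← hB]
  obtain ⟨κ, -, hκ⟩ := (Finset.le_sup_iff (WithBot.bot_lt_coe 0)).mp
    (hfull.zero_le_diag_of_tropMulMat_eq hCD i)
  have hCne : C i κ ≠ ⊥ := (WithBot.add_ne_bot.mp (ne_bot_of_le_ne_bot WithBot.coe_ne_bot hκ)).1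
  obtain ⟨c, hc⟩ := WithBot.ne_bot_iff_exists.mp hCne
  exact ⟨κ, c, hc.symm, fun t => hc ▸ row_eq_add_row_of_zero_le hB hA hκ t⟩
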